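/- arXiv:0804.0687 — 4 statements merged into one kernel-verified Lean document; each statement's English description precedes it below -/
import Mathlib

section
/- Let G be a finite group of order n > 1, and let δ be a positive real number such that every nontrivial irreducible complex representation of G has dimension at least δ. Then every product-free subset S of G satisfies |S| ≤ n/δ^(1/3). -/
/-!
Gowers' argument. Let `M` be convolution with the indicator of `S` on `ℓ²(G)` and let
`f = 1_S - |S|/n` be the balanced indicator of `S`. Since `M` commutes with the right regular
representation, every eigenspace of `M*M` meets the orthogonal complement of the constants in a
subrepresentation without fixed vectors, which has dimension at least `δ`. The eigenvalues are
nonnegative and sum to `tr M*M = n|S|`, so each eigenvalue seen by `f` is at most `n|S|/δ` and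
`‖Mf‖² ≤ (n|S|/δ)‖f‖² ≤ n|S|²/δ`. Product-freeness makes `Mf = -|S|²/n` on `S`, so
`‖Mf‖² ≥ |S|⁵/n²`, and comparing the two bounds gives `|S|³ δ ≤ n³`.
-/

open CategoryTheory Module LinearMap Module.End Finset

section Irreducible

variable {k G V : Type*} [Field k] [Monoid G] [AddCommGroup V] [Module k V]

theorem Subrepresentation.exists_le_isIrreducible {ρ : Representation k G V}
    [FiniteDimensional k V] (σ : Subrepresentation ρ) (hσ : σ ≠ ⊥) :
    ∃ τ ≤ σ, τ.toRepresentation.IsIrreducible := by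
  induction h : finrank k σ.toSubmodule using Nat.strong_induction_on generalizing σ with
  | _ d ih =>
  by_cases hirr : σ.toRepresentation.IsIrreducible
  · exact ⟨σ, le_rfl, hirr⟩
  have : Nontrivial σ.toSubmodule :=
    Submodule.nontrivial_iff_ne_bot.mpr fun h => hσ (Subrepresentation.ext h)
  obtain ⟨π, hπ_bot, hπ_top⟩ : ∃ π : Subrepresentation σ.toRepresentation, π ≠ ⊥ ∧ π ≠ ⊤ := by
    by_contra! hπ
    refine hirr
      { exists_pair_ne := ⟨⊥, ⊤, fun h => ?_⟩
        eq_bot_or_eq_top := fun π => or_iff_not_imp_left.mpr (hπ π) }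
    exact bot_ne_top (congrArg Subrepresentation.toSubmodule h)
  let π' : Subrepresentation ρ :=
    ⟨π.toSubmodule.map σ.toSubmodule.subtype, by
      rintro g _ ⟨v, hv, rfl⟩
      exact ⟨σ.toRepresentation g v, π.apply_mem_toSubmodule g hv, rfl⟩⟩
  have hπ'σ : π' ≤ σ := by
    rintro _ ⟨v, -, rfl⟩
    exact v.2
  have hπ'_bot : π' ≠ ⊥ := by
    refine fun h' => hπ_bot (Subrepresentation.ext ?_)
    apply Submodule.map_injective_of_injective σ.toSubmodule.injective_subtype
    exact (congrArg Subrepresentation.toSubmodule h').trans (Submodule.map_bot _).symm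
  have hlt : finrank k π'.toSubmodule < d := by
    rw [← h, Submodule.finrank_map_subtype_eq]
    exact Submodule.finrank_lt fun h => hπ_top (Subrepresentation.ext h)
  obtain ⟨τ, hτ, hirr⟩ := ih _ hlt π' hπ'_bot rfl
  exact ⟨τ, hτ.trans hπ'σ, hirr⟩

end Irreducible

theorem Representation.simple_fdRep_of_isIrreducible {G V : Type} [Monoid G] [AddCommGroup V]
    [Module ℂ V] [FiniteDimensional ℂ V] (ρ : Representation ℂ G V) [ρ.IsIrreducible] :
    Simple (FDRep.of ρ) := by
  have : Simple ((Rep.equivalenceModuleMonoidAlgebra).functor.obj (Rep.of ρ)) :=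
    simple_of_isSimpleModule (M := ρ.asModule)
  rw [simple_obj_iff] at this
  have : Simple ((forget₂ (FDRep ℂ G) (Rep ℂ G)).obj (FDRep.of ρ)) := this
  exact (forget₂ (FDRep ℂ G) (Rep ℂ G)).simple_of_simple_obj _

/-- Gowers' `δ`-quasirandomness. -/
def IsQuasirandom (G : Type) [Monoid G] (δ : ℝ) : Prop :=
  ∀ V : FDRep ℂ G, Simple V → (∃ (g : G) (v : V), V.ρ g v ≠ v) → δ ≤ finrank ℂ V

theorem IsQuasirandom.le_finrank {G V : Type} [Group G] {δ : ℝ} [AddCommGroup V] [Module ℂ V]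
    [FiniteDimensional ℂ V] {ρ : Representation ℂ G V} (hG : IsQuasirandom G δ)
    (σ : Subrepresentation ρ) (hσ : σ ≠ ⊥) (hfix : σ.toSubmodule ⊓ ρ.invariants = ⊥) :
    δ ≤ finrank ℂ σ.toSubmodule := by
  obtain ⟨τ, hτσ, hτ⟩ := σ.exists_le_isIrreducible hσ
  have : Nontrivial τ.toSubmodule := by
    rw [← not_subsingleton_iff_nontrivial]
    intro
    exact bot_ne_top (Subrepresentation.ext (Subsingleton.elim _ _) :
      (⊥ : Subrepresentation τ.toRepresentation) = ⊤)
  obtain ⟨v, hv⟩ := exists_ne (0 : τ.toSubmodule)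
  have hmoved : ∃ (g : G) (w : FDRep.of τ.toRepresentation),
      (FDRep.of τ.toRepresentation).ρ g w ≠ w := by
    by_contra! hfixed
    refine hv (Subtype.ext ((Submodule.mem_bot ℂ).mp ?_))
    rw [← hfix]
    exact ⟨hτσ v.2, fun g => congrArg Subtype.val (hfixed g v)⟩
  calc δ ≤ finrank ℂ τ.toSubmodule := hG _ τ.toRepresentation.simple_fdRep_of_isIrreducible hmoved
    _ ≤ finrank ℂ σ.toSubmodule := mod_cast Submodule.finrank_mono hτσ

section Spectral

variable {𝕜 E : Type*} [RCLike 𝕜] [NormedAddCommGroup E] [InnerProductSpace 𝕜 E]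
  [FiniteDimensional 𝕜 E] {T : E →ₗ[𝕜] E}

theorem LinearMap.IsPositive.eigenvalue_mul_finrank_eigenspace_le_re_trace (hT : T.IsPositive)
    (μ : ℝ) : μ * finrank 𝕜 (eigenspace T μ) ≤ RCLike.re (trace 𝕜 E T) := by
  set ev := hT.isSymmetric.eigenvalues rfl
  rw [hT.isSymmetric.re_trace_eq_sum_eigenvalues rfl,
    ← hT.isSymmetric.card_filter_eigenvalues_eq rfl]
  calc μ * #{i | (ev i : 𝕜) = μ} = ∑ i with (ev i : 𝕜) = μ, ev i := by
        rw [sum_congr rfl fun i hi => (RCLike.ofReal_inj.mp (mem_filter.mp hi).2), sum_const,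
          nsmul_eq_mul, mul_comm]
    _ ≤ ∑ i, ev i :=
        sum_le_sum_of_subset_of_nonneg (filter_subset _ _) fun i _ _ => hT.nonneg_eigenvalues rfl i

theorem LinearMap.IsSymmetric.re_inner_le_of_forall_hasEigenvalue_le (hT : T.IsSymmetric)
    {c : ℝ} (hc : ∀ μ : ℝ, HasEigenvalue T μ → μ ≤ c) (x : E) :
    RCLike.re (inner 𝕜 (T x) x) ≤ c * ‖x‖ ^ 2 := by
  set b := hT.eigenvectorBasis rfl
  set ev := hT.eigenvalues rfl
  have hcoord : ∀ i, inner 𝕜 (T x) (b i) * inner 𝕜 (b i) x = ev i * ‖inner 𝕜 (b i) x‖ ^ 2 := by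
    intro i
    rw [hT x, hT.apply_eigenvectorBasis, inner_smul_right, ← inner_conj_symm, mul_assoc,
      RCLike.conj_mul]
  calc RCLike.re (inner 𝕜 (T x) x) = ∑ i, ev i * ‖inner 𝕜 (b i) x‖ ^ 2 := by
        rw [← b.sum_inner_mul_inner, sum_congr rfl fun i _ => hcoord i]
        simp only [map_sum, ← RCLike.ofReal_pow, RCLike.re_ofReal_mul, RCLike.ofReal_re]
    _ ≤ ∑ i, c * ‖inner 𝕜 (b i) x‖ ^ 2 :=
        sum_le_sum fun i _ => mul_le_mul_of_nonneg_right
          (hc _ (hT.hasEigenvalue_eigenvalues rfl i)) (sq_nonneg _)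
    _ = c * ‖x‖ ^ 2 := by rw [← mul_sum, b.sum_sq_norm_inner_right]

end Spectral

section Unitary

variable {G E : Type} [Group G] [NormedAddCommGroup E] [InnerProductSpace ℂ E]

def Representation.IsUnitary (ρ : Representation ℂ G E) : Prop :=
  ∀ g u v, inner ℂ (ρ g u) (ρ g v) = inner ℂ u v

variable {ρ : Representation ℂ G E}

theorem Representation.IsUnitary.norm_apply (hρ : ρ.IsUnitary) (g : G) (v : E) :
    ‖ρ g v‖ = ‖v‖ := by
  rw [norm_eq_sqrt_re_inner (𝕜 := ℂ), norm_eq_sqrt_re_inner (𝕜 := ℂ), hρ]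

theorem Representation.IsUnitary.commute_adjoint [FiniteDimensional ℂ E] (hρ : ρ.IsUnitary)
    {M : E →ₗ[ℂ] E} (hM : ∀ g, Commute M (ρ g)) (g : G) : Commute (adjoint M) (ρ g) := by
  refine LinearMap.ext fun u => ext_inner_right ℂ fun v => ?_
  have hMg : ∀ w, M (ρ g⁻¹ w) = ρ g⁻¹ (M w) := fun w => LinearMap.congr_fun (hM g⁻¹) w
  calc inner ℂ (adjoint M (ρ g u)) v = inner ℂ (ρ g u) (ρ g (ρ g⁻¹ (M v))) := by
        rw [adjoint_inner_left, Representation.self_inv_apply]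
    _ = inner ℂ (ρ g (adjoint M u)) (ρ g (ρ g⁻¹ v)) := by
        rw [hρ, hρ, ← hMg, adjoint_inner_left]
    _ = inner ℂ (ρ g (adjoint M u)) v := by rw [Representation.self_inv_apply]

theorem Representation.IsUnitary.apply_mem_orthogonal_invariants (hρ : ρ.IsUnitary) {w : E}
    (hw : w ∈ ρ.invariantsᗮ) (g : G) : ρ g w ∈ ρ.invariantsᗮ := by
  rw [Submodule.mem_orthogonal] at hw ⊢
  intro v hv
  rw [← hv g, hρ, hw v hv]

theorem LinearMap.IsSymmetric.apply_mem_orthogonal_invariants {T : E →ₗ[ℂ] E}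
    (hT : T.IsSymmetric) (hTρ : ∀ g, Commute T (ρ g)) {w : E} (hw : w ∈ ρ.invariantsᗮ) :
    T w ∈ ρ.invariantsᗮ := by
  rw [Submodule.mem_orthogonal] at hw ⊢
  intro v hv
  have hTv : T v ∈ ρ.invariants := fun g => by
    rw [← Module.End.mul_apply, ← (hTρ g).eq, Module.End.mul_apply, hv g]
  rw [← hT, hw _ hTv]

variable [FiniteDimensional ℂ E] {δ : ℝ}

theorem IsQuasirandom.eigenvalue_mul_le_re_trace (hG : IsQuasirandom G δ) (hρ : ρ.IsUnitary)
    {T : E →ₗ[ℂ] E} (hT : T.IsPositive) (hTρ : ∀ g, Commute T (ρ g)) {μ : ℝ} {w : E}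
    (hw : w ∈ ρ.invariantsᗮ) (hw0 : w ≠ 0) (hTw : T w = (μ : ℂ) • w) :
    μ * δ ≤ RCLike.re (trace ℂ E T) := by
  let σ : Subrepresentation ρ :=
    ⟨eigenspace T μ ⊓ ρ.invariantsᗮ, fun g v ⟨hvT, hvW⟩ =>
      ⟨mem_eigenspace_iff.mpr (by
        rw [← Module.End.mul_apply, (hTρ g).eq, Module.End.mul_apply,
          mem_eigenspace_iff.mp hvT, map_smul]),
      hρ.apply_mem_orthogonal_invariants hvW g⟩⟩
  have hσ : σ ≠ ⊥ := by
    intro h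
    have hwσ : w ∈ σ.toSubmodule := ⟨mem_eigenspace_iff.mpr hTw, hw⟩
    rw [congrArg Subrepresentation.toSubmodule h] at hwσ
    exact hw0 ((Submodule.mem_bot ℂ).mp hwσ)
  have hfix : σ.toSubmodule ⊓ ρ.invariants = ⊥ := by
    rw [eq_bot_iff, ← ρ.invariants.inf_orthogonal_eq_bot, inf_comm ρ.invariants]
    exact inf_le_inf_right _ inf_le_right
  have hμ : 0 ≤ μ := eigenvalue_nonneg_of_nonneg
    (hasEigenvalue_of_hasEigenvector ⟨mem_eigenspace_iff.mpr hTw, hw0⟩) hT.re_inner_nonneg_right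
  calc μ * δ ≤ μ * finrank ℂ (eigenspace T μ) := by
        gcongr
        exact (hG.le_finrank σ hσ hfix).trans (mod_cast Submodule.finrank_mono inf_le_left)
    _ ≤ RCLike.re (trace ℂ E T) := hT.eigenvalue_mul_finrank_eigenspace_le_re_trace μ

theorem IsQuasirandom.norm_sq_apply_le (hG : IsQuasirandom G δ) (hδ : 0 < δ)
    (hρ : ρ.IsUnitary) {M : E →ₗ[ℂ] E} (hM : ∀ g, Commute M (ρ g)) {f : E}
    (hf : f ∈ ρ.invariantsᗮ) :
    ‖M f‖ ^ 2 ≤ RCLike.re (trace ℂ E (adjoint M ∘ₗ M)) / δ * ‖f‖ ^ 2 := by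
  set T := adjoint M ∘ₗ M
  have hT : T.IsPositive := isPositive_adjoint_comp_self M
  have hTρ : ∀ g, Commute T (ρ g) := fun g => (hρ.commute_adjoint hM g).mul_left (hM g)
  have hTW : ∀ w ∈ ρ.invariantsᗮ, T w ∈ ρ.invariantsᗮ := fun w =>
    hT.isSymmetric.apply_mem_orthogonal_invariants hTρ
  have hbound := (hT.isSymmetric.restrict_invariant hTW).re_inner_le_of_forall_hasEigenvalue_le
    (c := RCLike.re (trace ℂ E T) / δ) ?_ ⟨f, hf⟩
  · calc ‖M f‖ ^ 2 = RCLike.re (inner ℂ (T f) f) := by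
          rw [← inner_self_eq_norm_sq (𝕜 := ℂ), LinearMap.comp_apply, adjoint_inner_left]
      _ ≤ _ := hbound
  intro μ hμ
  obtain ⟨⟨w, hw⟩, hTw, hw0⟩ := hμ.exists_hasEigenvector
  rw [le_div_iff₀ hδ]
  exact hG.eigenvalue_mul_le_re_trace hρ hT hTρ hw (by simpa using hw0)
    (congrArg Subtype.val (mem_eigenspace_iff.mp hTw))

end Unitary

section EuclideanSpace

variable {ι : Type*} [Fintype ι]

theorem norm_sq_indicator (s : Finset ι) :
    ‖(WithLp.toLp 2 ((s : Set ι).indicator 1) : EuclideanSpace ℂ ι)‖ ^ 2 = #s := by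
  classical
  rw [EuclideanSpace.norm_sq_eq]
  simp [Set.indicator_apply, apply_ite]

theorem card_mul_norm_sq_le_norm_sq (s : Finset ι) {v : EuclideanSpace ℂ ι} {c : ℂ}
    (hv : ∀ x ∈ s, v x = c) : #s * ‖c‖ ^ 2 ≤ ‖v‖ ^ 2 := by
  calc #s * ‖c‖ ^ 2 = ∑ x ∈ s, ‖v x‖ ^ 2 := by
        rw [sum_congr rfl fun x hx => by rw [hv x hx], sum_const, nsmul_eq_mul]
    _ ≤ ∑ x, ‖v x‖ ^ 2 := sum_le_sum_of_subset_of_nonneg (subset_univ s) fun _ _ _ => sq_nonneg _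
    _ = ‖v‖ ^ 2 := (EuclideanSpace.norm_sq_eq v).symm

end EuclideanSpace

section GroupFunctions

variable {G : Type} [Group G]

variable (G) in
noncomputable def rightRegular : Representation ℂ G (EuclideanSpace ℂ G) where
  toFun g :=
    { toFun f := WithLp.toLp 2 fun x => f (x * g)
      map_add' _ _ := rfl
      map_smul' _ _ := rfl }
  map_one' := by ext f x; simp
  map_mul' g h := by ext f x; exact congrArg f (mul_assoc x g h).symm

@[simp]
theorem rightRegular_apply (g : G) (f : EuclideanSpace ℂ G) (x : G) :
    rightRegular G g f x = f (x * g) := rfl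

theorem rightRegular_isUnitary [Fintype G] : (rightRegular G).IsUnitary := fun g u v => by
  simp only [PiLp.inner_apply]
  exact Fintype.sum_equiv (Equiv.mulRight g) _ _ fun x => rfl

theorem const_mem_invariants_rightRegular (c : ℂ) :
    WithLp.toLp 2 (fun _ => c) ∈ (rightRegular G).invariants := fun _ => rfl

theorem mem_orthogonal_invariants_rightRegular [Fintype G] {f : EuclideanSpace ℂ G}
    (hf : ∑ x, f x = 0) : f ∈ (rightRegular G).invariantsᗮ := by
  rw [Submodule.mem_orthogonal]
  intro v hv
  have hconst : ∀ x, v x = v 1 := fun x => by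
    simpa using congrArg (fun w : EuclideanSpace ℂ G => w 1) (hv x)
  simp [PiLp.inner_apply, hconst, ← sum_mul, hf]

noncomputable def indicatorConv (S : Finset G) :
    EuclideanSpace ℂ G →ₗ[ℂ] EuclideanSpace ℂ G where
  toFun f := WithLp.toLp 2 fun x => ∑ s ∈ S, f (s⁻¹ * x)
  map_add' f h := by ext x; exact sum_add_distrib
  map_smul' c f := by ext x; simp [mul_sum]

@[simp]
theorem indicatorConv_apply (S : Finset G) (f : EuclideanSpace ℂ G) (x : G) :
    indicatorConv S f x = ∑ s ∈ S, f (s⁻¹ * x) := rfl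

theorem commute_indicatorConv_rightRegular (S : Finset G) (g : G) :
    Commute (indicatorConv S) (rightRegular G g) := by
  ext f x
  simp [mul_assoc]

theorem indicatorConv_const (S : Finset G) (c : ℂ) :
    indicatorConv S (WithLp.toLp 2 fun _ => c) = WithLp.toLp 2 fun _ => #S * c := by
  ext x
  simp

theorem indicatorConv_single [DecidableEq G] (S : Finset G) (x : G) :
    indicatorConv S (EuclideanSpace.single x 1) =
      rightRegular G x⁻¹ (WithLp.toLp 2 ((S : Set G).indicator 1)) := by
  ext y
  have : ∀ s, s⁻¹ * y = x ↔ y * x⁻¹ = s := fun s => by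
    rw [inv_mul_eq_iff_eq_mul, mul_inv_eq_iff_eq_mul, eq_comm]
  simp [Set.indicator_apply, this]

theorem indicatorConv_indicator_apply_of_mem {S : Finset G}
    (hfree : ∀ a ∈ S, ∀ b ∈ S, a * b ∉ S) {x : G} (hx : x ∈ S) :
    indicatorConv S (WithLp.toLp 2 ((S : Set G).indicator 1)) x = 0 := by
  refine sum_eq_zero fun s hs => Set.indicator_of_notMem (fun h => hfree s hs _ h ?_) _
  rwa [mul_inv_cancel_left]

variable [Fintype G]

theorem re_trace_adjoint_comp_indicatorConv (S : Finset G) :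
    RCLike.re (trace ℂ _ (adjoint (indicatorConv S) ∘ₗ indicatorConv S)) =
      Fintype.card G * #S := by
  classical
  rw [trace_eq_sum_inner _ (EuclideanSpace.basisFun G ℂ)]
  simp only [map_sum, LinearMap.comp_apply, adjoint_inner_right, inner_self_eq_norm_sq]
  simp [indicatorConv_single, rightRegular_isUnitary.norm_apply, norm_sq_indicator]

noncomputable def balancedIndicator (S : Finset G) : EuclideanSpace ℂ G :=
  WithLp.toLp 2 ((S : Set G).indicator 1) - WithLp.toLp 2 fun _ => (#S / Fintype.card G : ℂ)

theorem sum_balancedIndicator (S : Finset G) : ∑ x, balancedIndicator S x = 0 := by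
  have hcard : (Fintype.card G : ℂ) ≠ 0 := Nat.cast_ne_zero.mpr Fintype.card_ne_zero
  have hind : ∑ x, (S : Set G).indicator (1 : G → ℂ) x = #S := by
    rw [sum_indicator_subset _ (subset_univ S)]
    simp
  simp [balancedIndicator, sum_sub_distrib, hind, mul_div_cancel₀ _ hcard]

theorem balancedIndicator_mem_orthogonal_invariants (S : Finset G) :
    balancedIndicator S ∈ (rightRegular G).invariantsᗮ :=
  mem_orthogonal_invariants_rightRegular (sum_balancedIndicator S)

theorem norm_sq_balancedIndicator_le (S : Finset G) : ‖balancedIndicator S‖ ^ 2 ≤ #S := by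
  have hpyth := norm_add_sq_eq_norm_sq_add_norm_sq_of_inner_eq_zero (𝕜 := ℂ) _ _
    ((Submodule.mem_orthogonal' _ _).mp (balancedIndicator_mem_orthogonal_invariants S) _
      (const_mem_invariants_rightRegular (#S / Fintype.card G : ℂ)))
  rw [balancedIndicator, sub_add_cancel, ← sq, ← sq, ← sq, norm_sq_indicator,
    ← balancedIndicator] at hpyth
  nlinarith [sq_nonneg ‖(WithLp.toLp 2 fun _ => (#S / Fintype.card G : ℂ) : EuclideanSpace ℂ G)‖]

theorem indicatorConv_balancedIndicator_apply_of_mem {S : Finset G}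
    (hfree : ∀ a ∈ S, ∀ b ∈ S, a * b ∉ S) {x : G} (hx : x ∈ S) :
    indicatorConv S (balancedIndicator S) x = -(#S ^ 2 / Fintype.card G : ℂ) := by
  rw [balancedIndicator, map_sub, indicatorConv_const, WithLp.ofLp_sub, Pi.sub_apply,
    indicatorConv_indicator_apply_of_mem hfree hx]
  ring

end GroupFunctions

theorem le_div_rpow_one_third {a N δ : ℝ} (hN : 0 ≤ N) (hδ : 0 < δ) (h : a ^ 3 * δ ≤ N ^ 3) :
    a ≤ N / δ ^ ((1 : ℝ) / 3) := by
  rw [le_div_iff₀ (by positivity)]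
  refine le_of_pow_le_pow_left₀ three_ne_zero hN ?_
  rwa [mul_pow, ← Real.rpow_natCast (δ ^ _), ← Real.rpow_mul hδ.le, Nat.cast_ofNat,
    one_div_mul_cancel three_ne_zero, Real.rpow_one]

theorem product_free_bound_general
    {G : Type} [Group G] [Fintype G]
    (n : ℕ) (hn : n = Fintype.card G)
    (δ : ℝ) (hδ : 0 < δ)
    (hrep : ∀ V : FDRep ℂ G, CategoryTheory.Simple V →
      (∃ (g : G) (v : V), V.ρ g v ≠ v) → δ ≤ Module.finrank ℂ V)
    (S : Finset G)
    (hfree : ∀ a ∈ S, ∀ b ∈ S, a * b ∉ S) :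
    (S.card : ℝ) ≤ (n : ℝ) / δ ^ ((1 : ℝ) / 3) := by
  subst hn
  rcases S.eq_empty_or_nonempty with rfl | hS
  · simp only [card_empty, Nat.cast_zero]
    positivity
  have hN : (0 : ℝ) < Fintype.card G := Nat.cast_pos.mpr Fintype.card_pos
  have hspec := IsQuasirandom.norm_sq_apply_le hrep hδ rightRegular_isUnitary
    (commute_indicatorConv_rightRegular S) (balancedIndicator_mem_orthogonal_invariants S)
  rw [re_trace_adjoint_comp_indicatorConv] at hspec
  have hlow := card_mul_norm_sq_le_norm_sq S fun x hx =>
    indicatorConv_balancedIndicator_apply_of_mem hfree hx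
  simp only [norm_neg, norm_div, norm_pow, Complex.norm_natCast] at hlow
  have key : (#S : ℝ) * (#S ^ 2 / Fintype.card G) ^ 2 ≤ Fintype.card G * #S / δ * #S :=
    hlow.trans (hspec.trans
      (mul_le_mul_of_nonneg_left (norm_sq_balancedIndicator_le S) (by positivity)))
  -- besides clearing denominators, `field_simp` cancels `#S ^ 2`, nonzero by `hS`
  field_simp at key
  exact le_div_rpow_one_third hN.le hδ key

/-- Let `G` be a finite group of order `n > 1`, and let `δ > 0` be such that every
nontrivial irreducible complex representation of `G` has dimension at least `δ`.
Then every product-free subset `S` of `G` satisfies `|S| ≤ n / δ^(1/3)`. -/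
theorem product_free_bound
    {G : Type} [Group G] [Fintype G] [DecidableEq G]
    (n : ℕ) (hn : n = Fintype.card G) (hn1 : 1 < n)
    (δ : ℝ) (hδ : 0 < δ)
    (hrep : ∀ V : FDRep ℂ G, CategoryTheory.Simple V →
      (∃ (g : G) (v : V), V.ρ g v ≠ v) → δ ≤ Module.finrank ℂ V)
    (S : Finset G)
    (hfree : ∀ a ∈ S, ∀ b ∈ S, a * b ∉ S) :
    (S.card : ℝ) ≤ (n : ℝ) / δ ^ ((1 : ℝ) / 3) :=
  product_free_bound_general n hn δ hδ hrep S hfree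
end

section
/- There exists a constant c > 0 such that for every finite group G of order n > 1, if m denotes the smallest index of a proper subgroup of G (the index of the largest proper subgroup), then G contains a product-free subset of size at least c·n·m^(-1/2); that is, α(G) ≥ c·n·m^(-1/2) and β(G) ≥ c·m^(-1/2). -/
/-!
A proper subgroup `H` of index `m` gives a transitive action of `G` on `Ω = G ⧸ H`. Fix `x₀ ∈ Ω`.
For `A ⊆ Ω`, the set `S(A)` of those `g` with `g • x₀ ∈ A` and `g • A ∩ A = ∅` is product-free:
for `a, b ∈ S(A)` the point `(a * b) • x₀ = a • (b • x₀)` lies in `a • A`, which misses `A`.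

Take `A` random, containing each point independently with probability `p = 1 / (8 √m)`.
An element `g` moving `x₀` lies in `S(A)` as soon as `g • x₀ ∈ A` and no `a` has
`{g • x₀, a, g • a} ⊆ A`. Such a triple has three points unless `a` is `x₀`, `g • x₀` or a fixed
point of `g`, and by Burnside's lemma the fixed points of all `g` add up to `|G|`. A union bound
gives `𝔼 |S(A)| ≥ |G| (p / 2 - 3 p² - m p³) ≥ |G| / (40 √m)`.
-/

open Finset

section BernoulliSubset

variable {Ω : Type*} [Fintype Ω] [DecidableEq Ω]

/-- The probability of `A` for the random subset of `Ω` containing each point independently with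
probability `p`; expectations are written as sums `∑ A, bernoulliWeight p A * f A`. -/
def bernoulliWeight (p : ℝ) (A : Finset Ω) : ℝ := p ^ #A * (1 - p) ^ #Aᶜ

theorem bernoulliWeight_nonneg {p : ℝ} (hp0 : 0 ≤ p) (hp1 : p ≤ 1) (A : Finset Ω) :
    0 ≤ bernoulliWeight p A := by
  have := sub_nonneg.2 hp1
  unfold bernoulliWeight
  positivity

theorem sum_bernoulliWeight_mul_ite_subset (p : ℝ) (T : Finset Ω) :
    ∑ A, bernoulliWeight p A * (if T ⊆ A then 1 else 0) = p ^ #T := by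
  have key := prod_add (fun _ => p) (fun x => if x ∈ T then 0 else 1 - p) univ
  rw [powerset_univ] at key
  calc ∑ A, bernoulliWeight p A * (if T ⊆ A then 1 else 0)
      = ∑ A, (∏ _x ∈ A, p) * ∏ x ∈ univ \ A, (if x ∈ T then (0 : ℝ) else 1 - p) := by
        refine sum_congr rfl fun A _ => ?_
        rw [bernoulliWeight, prod_const, ← compl_eq_univ_sdiff]
        split_ifs with hTA
        · rw [prod_congr rfl fun x hx => if_neg fun hxT => mem_compl.1 hx (hTA hxT), prod_const,
            mul_one]
        · obtain ⟨t, htT, htA⟩ := not_subset.1 hTA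
          rw [prod_eq_zero (mem_compl.2 htA) (by rw [if_pos htT]), mul_zero, mul_zero]
    _ = ∏ x, (p + if x ∈ T then 0 else 1 - p) := key.symm
    _ = p ^ #T := by
        simp_rw [apply_ite (p + ·), add_zero, add_sub_cancel, prod_ite_mem, univ_inter, prod_const]

theorem sum_bernoulliWeight (p : ℝ) : ∑ A : Finset Ω, bernoulliWeight p A = 1 := by
  simpa using sum_bernoulliWeight_mul_ite_subset (Ω := Ω) p ∅

theorem exists_le_of_le_sum_bernoulliWeight_mul {p : ℝ} (hp0 : 0 ≤ p) (hp1 : p ≤ 1)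
    {f : Finset Ω → ℝ} {b : ℝ} (h : b ≤ ∑ A, bernoulliWeight p A * f A) : ∃ A, b ≤ f A := by
  obtain ⟨A, -, hA⟩ := exists_max_image univ f univ_nonempty
  refine ⟨A, h.trans ?_⟩
  calc ∑ B, bernoulliWeight p B * f B ≤ ∑ B, bernoulliWeight p B * f A :=
        sum_le_sum fun B _ =>
          mul_le_mul_of_nonneg_left (hA B (mem_univ B)) (bernoulliWeight_nonneg hp0 hp1 B)
    _ = f A := by rw [← sum_mul, sum_bernoulliWeight, one_mul]

end BernoulliSubset

def IsProductFree {M : Type*} [Mul M] (S : Finset M) : Prop := ∀ a ∈ S, ∀ b ∈ S, a * b ∉ S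

namespace MulAction

section Monoid

variable {G Ω : Type*} [Monoid G] [MulAction G Ω] [Fintype Ω] [DecidableEq Ω]

theorem sum_bernoulliWeight_mul_ite_sub_sum_ite_triple (p : ℝ) (x₀ : Ω) (g : G) :
    ∑ A, bernoulliWeight p A * ((if ({g • x₀} : Finset Ω) ⊆ A then 1 else 0)
        - ∑ a : Ω, if {g • x₀, a, g • a} ⊆ A then 1 else 0)
      = p - ∑ a : Ω, p ^ #{g • x₀, a, g • a} := by
  simp only [mul_sub, mul_sum, sum_sub_distrib, sum_bernoulliWeight_mul_ite_subset, card_singleton,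
    pow_one]
  rw [sum_comm]
  simp only [sum_bernoulliWeight_mul_ite_subset]

variable [Fintype G]

variable (G) in
def separatingSet (x₀ : Ω) (A : Finset Ω) : Finset G := {g | g • x₀ ∈ A ∧ ∀ a ∈ A, g • a ∉ A}

theorem isProductFree_separatingSet (x₀ : Ω) (A : Finset Ω) :
    IsProductFree (separatingSet G x₀ A) := by
  intro g hg h hh hgh
  simp only [separatingSet, mem_filter, mem_univ, true_and] at hg hh hgh
  exact hg.2 (h • x₀) hh.1 (mul_smul g h x₀ ▸ hgh.1)

variable [DecidableEq G]

theorem ite_sub_sum_ite_triple_le (x₀ : Ω) (A : Finset Ω) (g : G) :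
    ((if ({g • x₀} : Finset Ω) ⊆ A then 1 else 0)
        - ∑ a : Ω, if {g • x₀, a, g • a} ⊆ A then 1 else 0 : ℝ)
      ≤ if g ∈ separatingSet G x₀ A then 1 else 0 := by
  by_cases hg : g ∈ separatingSet G x₀ A
  · have hnot : ∀ a, ¬ {g • x₀, a, g • a} ⊆ A := fun a h =>
      (mem_filter.1 hg).2.2 a (h (by simp)) (h (by simp))
    rw [if_pos hg, sum_eq_zero fun a _ => if_neg (hnot a), sub_zero]
    split_ifs <;> norm_num
  · rw [if_neg hg]
    by_cases hx : g • x₀ ∈ A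
    · obtain ⟨a, ha, hga⟩ : ∃ a ∈ A, g • a ∈ A := by
        by_contra! h
        exact hg (mem_filter.2 ⟨mem_univ g, hx, h⟩)
      have hone : (1 : ℝ) ≤ ∑ a : Ω, if {g • x₀, a, g • a} ⊆ A then 1 else 0 :=
        single_le_sum (f := fun a => if {g • x₀, a, g • a} ⊆ A then (1 : ℝ) else 0)
          (fun _ _ => by positivity) (mem_univ a) |>.trans_eq' <| by
            simp [insert_subset_iff, hx, ha, hga]
      split_ifs <;> linarith
    · simp [hx]

theorem sum_ite_sub_sum_ite_triple_le_card (x₀ : Ω) (A : Finset Ω) (T : Finset G) :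
    ∑ g ∈ T, ((if ({g • x₀} : Finset Ω) ⊆ A then 1 else 0)
        - ∑ a : Ω, if {g • x₀, a, g • a} ⊆ A then 1 else 0 : ℝ)
      ≤ #(separatingSet G x₀ A) := by
  calc _ ≤ ∑ g ∈ T, if g ∈ separatingSet G x₀ A then (1 : ℝ) else 0 :=
        sum_le_sum fun g _ => ite_sub_sum_ite_triple_le x₀ A g
    _ ≤ ∑ g, if g ∈ separatingSet G x₀ A then (1 : ℝ) else 0 :=
        sum_le_sum_of_subset_of_nonneg (subset_univ T) fun _ _ _ => by positivity
    _ = #(separatingSet G x₀ A) := by simp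

end Monoid

section Group

variable {G Ω : Type*} [Group G] [MulAction G Ω]

theorem two_le_card_triple [DecidableEq Ω] {x₀ : Ω} {g : G} (hg : g • x₀ ≠ x₀) (a : Ω) :
    2 ≤ #{g • x₀, a, g • a} := by
  by_cases ha : a = g • x₀
  · subst ha
    exact one_lt_card.2
      ⟨g • x₀, by simp, g • g • x₀, by simp, fun h => hg (smul_left_cancel g h).symm⟩
  · exact one_lt_card.2 ⟨g • x₀, by simp, a, by simp, Ne.symm ha⟩

theorem card_triple_eq_three [DecidableEq Ω] {x₀ a : Ω} {g : G} (h₁ : a ≠ g • x₀) (h₂ : a ≠ x₀)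
    (h₃ : g • a ≠ a) : #{g • x₀, a, g • a} = 3 :=
  card_eq_three.2 ⟨_, _, _, Ne.symm h₁, fun h => h₂ (smul_left_cancel g h).symm, h₃.symm, rfl⟩

theorem pow_card_triple_le [DecidableEq Ω] {p : ℝ} (hp0 : 0 ≤ p) (hp1 : p ≤ 1) {x₀ : Ω} {g : G}
    (hg : g • x₀ ≠ x₀) (a : Ω) :
    p ^ #{g • x₀, a, g • a} ≤ p ^ 3 + p ^ 2 * ((if a = g • x₀ then 1 else 0)
      + (if a = x₀ then 1 else 0) + (if g • a = a then 1 else 0)) := by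
  by_cases hgen : a ≠ g • x₀ ∧ a ≠ x₀ ∧ g • a ≠ a
  · obtain ⟨h₁, h₂, h₃⟩ := hgen
    rw [card_triple_eq_three h₁ h₂ h₃, if_neg h₁, if_neg h₂, if_neg h₃]
    simp
  · have hcount : (1 : ℝ) ≤ (if a = g • x₀ then 1 else 0) + (if a = x₀ then 1 else 0)
        + (if g • a = a then 1 else 0) := by
      simp only [not_and_or, not_not] at hgen
      rcases hgen with h | h | h <;> simp only [h, if_true] <;> split_ifs <;> norm_num
    calc p ^ #{g • x₀, a, g • a} ≤ p ^ 2 := pow_le_pow_of_le_one hp0 hp1 (two_le_card_triple hg a)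
      _ ≤ p ^ 3 + p ^ 2 * ((if a = g • x₀ then 1 else 0)
          + (if a = x₀ then 1 else 0) + (if g • a = a then 1 else 0)) := by
        nlinarith [pow_nonneg hp0 3, pow_nonneg hp0 2]

variable [Fintype Ω]

theorem sum_pow_card_triple_le [DecidableEq Ω] {p : ℝ} (hp0 : 0 ≤ p) (hp1 : p ≤ 1) {x₀ : Ω}
    {g : G} (hg : g • x₀ ≠ x₀) :
    ∑ a : Ω, p ^ #{g • x₀, a, g • a}
      ≤ Fintype.card Ω * p ^ 3 + (#{a : Ω | g • a = a} + 2) * p ^ 2 := by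
  refine (sum_le_sum fun a _ => pow_card_triple_le hp0 hp1 hg a).trans_eq ?_
  simp only [sum_add_distrib, ← mul_sum, sum_const, card_univ, nsmul_eq_mul, sum_ite_eq',
    mem_univ, if_true, sum_boole]
  ring

variable [Fintype G] [IsPretransitive G Ω]

theorem card_fixing_mul_card_eq_card [DecidableEq Ω] (x : Ω) :
    #{g : G | g • x = x} * Fintype.card Ω = Fintype.card G := by
  have := (stabilizer G x).card_mul_index
  rw [index_stabilizer_of_transitive, Nat.card_eq_fintype_card, Nat.card_eq_fintype_card,
    Nat.card_eq_fintype_card, Fintype.card_subtype] at this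
  simpa only [mem_stabilizer_iff] using this

theorem card_le_two_mul_card_moving [DecidableEq Ω] (hΩ : 2 ≤ Fintype.card Ω) (x : Ω) :
    Fintype.card G ≤ 2 * #{g : G | g • x ≠ x} := by
  have hsplit := card_filter_add_card_filter_not (s := (univ : Finset G)) (· • x = x)
  have hfixing := card_fixing_mul_card_eq_card (G := G) x
  rw [card_univ] at hsplit
  nlinarith

theorem sum_card_fixedPoints_eq_card [DecidableEq Ω] [Nonempty Ω] :
    ∑ g : G, #{a : Ω | g • a = a} = Fintype.card G := by
  classical
  obtain ⟨_⟩ := (pretransitive_iff_unique_quotient_of_nonempty G Ω).1 inferInstance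
  have burnside := sum_card_fixedBy_eq_card_orbits_mul_card_group G Ω
  rw [Fintype.card_unique, one_mul] at burnside
  rw [← burnside]
  refine sum_congr rfl fun g _ => ?_
  rw [Fintype.card_subtype]
  rfl

theorem exists_le_card_separatingSet [DecidableEq G] [DecidableEq Ω] (hΩ : 2 ≤ Fintype.card Ω)
    (x₀ : Ω) {p : ℝ} (hp0 : 0 ≤ p) (hp1 : p ≤ 1) :
    ∃ A : Finset Ω, Fintype.card G * (p / 2 - 3 * p ^ 2 - Fintype.card Ω * p ^ 3)
      ≤ #(separatingSet G x₀ A) := by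
  have : Nonempty Ω := ⟨x₀⟩
  set T : Finset G := {g | g • x₀ ≠ x₀}
  have hT : (Fintype.card G : ℝ) ≤ 2 * #T := by exact_mod_cast card_le_two_mul_card_moving hΩ x₀
  have hTG : (#T : ℝ) ≤ Fintype.card G := by exact_mod_cast card_le_univ T
  have hfixed : ∑ g ∈ T, (#{a : Ω | g • a = a} : ℝ) ≤ Fintype.card G := by
    have := sum_card_fixedPoints_eq_card (G := G) (Ω := Ω)
    exact_mod_cast this ▸ sum_le_sum_of_subset (subset_univ T)
  apply exists_le_of_le_sum_bernoulliWeight_mul hp0 hp1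
  calc Fintype.card G * (p / 2 - 3 * p ^ 2 - Fintype.card Ω * p ^ 3)
      ≤ #T * (p - 2 * p ^ 2 - Fintype.card Ω * p ^ 3)
          - p ^ 2 * ∑ g ∈ T, (#{a : Ω | g • a = a} : ℝ) := by
        have hcubic : (0 : ℝ) ≤ 2 * p ^ 2 + Fintype.card Ω * p ^ 3 := by positivity
        nlinarith [mul_le_mul_of_nonneg_right hT hp0, mul_le_mul_of_nonneg_right hTG hcubic,
          mul_le_mul_of_nonneg_left hfixed (sq_nonneg p)]
    _ = ∑ g ∈ T, (p - (Fintype.card Ω * p ^ 3 + (#{a : Ω | g • a = a} + 2) * p ^ 2)) := by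
        simp only [sum_sub_distrib, sum_add_distrib, ← sum_mul, sum_const, nsmul_eq_mul]
        ring
    _ ≤ ∑ g ∈ T, (p - ∑ a : Ω, p ^ #{g • x₀, a, g • a}) :=
        sum_le_sum fun g hg =>
          sub_le_sub_left (sum_pow_card_triple_le hp0 hp1 (mem_filter.1 hg).2) p
    _ = ∑ A, bernoulliWeight p A * ∑ g ∈ T, ((if ({g • x₀} : Finset Ω) ⊆ A then 1 else 0)
          - ∑ a : Ω, if {g • x₀, a, g • a} ⊆ A then 1 else 0) := by
        simp only [mul_sum]
        rw [sum_comm]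
        simp only [sum_bernoulliWeight_mul_ite_sub_sum_ite_triple]
    _ ≤ ∑ A, bernoulliWeight p A * #(separatingSet G x₀ A) :=
        sum_le_sum fun A _ => mul_le_mul_of_nonneg_left
          (sum_ite_sub_sum_ite_triple_le_card x₀ A T) (bernoulliWeight_nonneg hp0 hp1 A)

theorem exists_isProductFree_card_ge (hΩ : 2 ≤ Fintype.card Ω) :
    ∃ S : Finset G, IsProductFree S ∧ Fintype.card G / (40 * √(Fintype.card Ω)) ≤ #S := by
  classical
  obtain ⟨x₀⟩ := Fintype.card_pos_iff.1 (by omega : 0 < Fintype.card Ω)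
  set s := √(Fintype.card Ω : ℝ)
  have hs2 : s ^ 2 = Fintype.card Ω := Real.sq_sqrt (Nat.cast_nonneg _)
  have hs : 2 ≤ s ^ 2 := by rw [hs2]; exact_mod_cast hΩ
  have hs0 : 0 < s := Real.sqrt_pos.2 (by positivity)
  have hp1 : 1 / (8 * s) ≤ 1 := by rw [div_le_one (by positivity)]; nlinarith
  obtain ⟨A, hA⟩ := exists_le_card_separatingSet (G := G) hΩ x₀ (by positivity) hp1
  refine ⟨_, isProductFree_separatingSet (G := G) x₀ A, le_trans ?_ hA⟩
  rw [← hs2, div_eq_mul_one_div]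
  gcongr
  rw [div_le_iff₀ (by positivity)]
  field_simp
  nlinarith

end Group

end MulAction

/-- There is a constant `c > 0` such that every finite group `G` of order `n > 1` contains
a product-free subset of size at least `c * n * m ^ (-1/2)`, where `m` is the smallest
index of a proper subgroup of `G`. -/
theorem product_free_lower_bound :
    ∃ c : ℝ, 0 < c ∧
      ∀ (G : Type) [Group G] [Fintype G],
        1 < Fintype.card G →
        ∀ m : ℕ, IsLeast {k : ℕ | ∃ H : Subgroup G, H ≠ ⊤ ∧ H.index = k} m →
          ∃ S : Finset G, (∀ a ∈ S, ∀ b ∈ S, a * b ∉ S) ∧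
            c * (Fintype.card G : ℝ) * (m : ℝ) ^ (-(1 : ℝ) / 2) ≤ S.card := by
  refine ⟨1 / 40, by norm_num, fun G _ _ _ m hm => ?_⟩
  obtain ⟨H, hH, rfl⟩ := hm.1
  let := Fintype.ofFinite (G ⧸ H)
  have hindex : Fintype.card (G ⧸ H) = H.index := by
    rw [Subgroup.index_eq_card, Nat.card_eq_fintype_card]
  obtain ⟨S, hS, hcard⟩ := MulAction.exists_isProductFree_card_ge (G := G) (Ω := G ⧸ H)
    (hindex ▸ H.one_lt_index_of_ne_top hH)
  refine ⟨S, hS, le_of_eq_of_le ?_ hcard⟩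
  rw [hindex, neg_div, Real.rpow_neg (Nat.cast_nonneg _), ← Real.sqrt_eq_rpow]
  ring
end

section
/- Let G be a finite group of order n acting transitively on the set {1, 2, …, m} with m > 3, and let k be an integer with 3 ≤ k ≤ m − 1. For a subset T of {2, …, m}, define S_T = { g ∈ G : g(1) ∈ T }. Then there exists a subset T of {2, …, m} with |T| = k such that the number of solutions of the equation ab = c with a, b, c ∈ S_T (i.e., the number of pairs (a, b) ∈ S_T × S_T with ab ∈ S_T) is at most 4n²k³/(m − 3)³. -/
/-!
Average over all `k`-subsets `T` of `X \ {x₀}`. A pair `(a, b)` is counted for `T` exactly when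
the set `{a • x₀, b • x₀, (a * b) • x₀}` lies in `T`. When these three points are distinct this
happens for a proportion `C(k, 3) / C(m - 1, 3) ≤ (k / (m - 3))³` of the sets `T`; when two of them
coincide, for a proportion at most `(k / (m - 2))²`, but by transitivity only `2n² / m` pairs have
such a coincidence. So some `T` has at most `2n²k² / (m (m - 2)²) + n²k³ / (m - 3)³` such pairs.
-/

open Finset

namespace Finset

variable {α : Type*} [DecidableEq α]

lemma card_filter_powersetCard_superset_mul_choose_le {s t : Finset α} {n j : ℕ} (hj : j ≤ #s) :
    #{u ∈ t.powersetCard n | s ⊆ u} * (#t).choose j ≤ (#t).choose n * n.choose j := by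
  obtain ⟨r, hrs, rfl⟩ := exists_subset_card_eq hj
  have hmono : #{u ∈ t.powersetCard n | s ⊆ u} ≤ #{u ∈ t.powersetCard n | r ⊆ u} :=
    card_le_card (monotone_filter_right _ fun _ _ hsu => hrs.trans hsu)
  by_cases hr : r ⊆ t ∧ #r ≤ n
  · calc _ ≤ #{u ∈ t.powersetCard n | r ⊆ u} * (#t).choose #r := by gcongr
      _ = (#t).choose n * n.choose #r := by
        rw [card_filter_powersetCard_subset r t n hr.1 hr.2, Nat.choose_mul hr.2, mul_comm]
  · have hempty : {u ∈ t.powersetCard n | r ⊆ u} = ∅ := by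
      refine filter_eq_empty_iff.2 fun u hu hru => hr ⟨hru.trans (mem_powersetCard.1 hu).1, ?_⟩
      exact (card_le_card hru).trans (mem_powersetCard.1 hu).2.le
    rw [hempty, card_empty, Nat.le_zero] at hmono
    simp [hmono]

end Finset

lemma Nat.choose_div_choose_le_div_pow {α : Type*} [Field α] [LinearOrder α] [IsStrictOrderedRing α]
    {n N j : ℕ} (hj : j ≤ N) :
    (n.choose j : α) / N.choose j ≤ n ^ j / ((N : α) + 1 - j) ^ j := by
  have hpos : (0 : α) < (N : α) + 1 - j := by
    have : (j : α) ≤ N := by exact_mod_cast hj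
    linarith
  have hlow := Nat.pow_le_choose (α := α) j N
  rw [Nat.cast_sub (by omega), Nat.cast_add, Nat.cast_one] at hlow
  calc (n.choose j : α) / N.choose j
      ≤ (n ^ j / j.factorial) / (((N : α) + 1 - j) ^ j / j.factorial) :=
        div_le_div₀ (by positivity) (Nat.choose_le_pow_div j n) (by positivity) hlow
    _ = n ^ j / ((N : α) + 1 - j) ^ j := div_div_div_cancel_right₀ (by positivity) _ _

lemma two_div_mul_sq_add_mul_cube_le {m a : ℝ} (hm : 3 < m) (ha : 0 ≤ a) (k : ℕ) :
    2 * a / m * (k ^ 2 / (m - 2) ^ 2) + a * (k ^ 3 / (m - 3) ^ 3)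
      ≤ 4 * a * k ^ 3 / (m - 3) ^ 3 := by
  have hk : (k : ℝ) ^ 2 ≤ k ^ 3 := by
    rcases Nat.eq_zero_or_pos k with rfl | hk
    · simp
    · exact pow_le_pow_right₀ (by exact_mod_cast hk) (by norm_num)
  have hgeom : (m - 3) ^ 3 ≤ m * (m - 2) ^ 2 := by nlinarith
  have hpair : 2 * a / m * (k ^ 2 / (m - 2) ^ 2) ≤ 3 * a * k ^ 3 / (m - 3) ^ 3 := by
    rw [div_mul_div_comm,
      div_le_div_iff₀ (mul_pos (by linarith) (pow_pos (by linarith) 2)) (pow_pos (by linarith) 3)]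
    calc 2 * a * k ^ 2 * (m - 3) ^ 3 ≤ 2 * a * k ^ 3 * (m * (m - 2) ^ 2) := by gcongr
      _ ≤ 3 * a * k ^ 3 * (m * (m - 2) ^ 2) := by gcongr; norm_num
  calc _ ≤ 3 * a * k ^ 3 / (m - 3) ^ 3 + a * (k ^ 3 / (m - 3) ^ 3) := by gcongr
    _ = _ := by ring

open MulAction

section TransitiveAction

variable {G X : Type*} [Group G] [MulAction G X] [DecidableEq X]

def productTriple (x : X) (p : G × G) : Finset X := {p.1 • x, p.2 • x, (p.1 * p.2) • x}

variable {x : X} {p : G × G}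

lemma mem_productTriple_of_smul_eq (h : p.2 • x = x) : x ∈ productTriple x p := by
  simp [productTriple, h]

lemma two_le_card_productTriple (h : p.2 • x ≠ x) : 2 ≤ #(productTriple x p) :=
  one_lt_card.2 ⟨p.1 • x, by simp [productTriple], (p.1 * p.2) • x, by simp [productTriple],
    by simpa [mul_smul, eq_comm] using h⟩

lemma card_superset_productTriple_mul_choose_le [Fintype X] {k j : ℕ}
    (hj : p.2 • x = x ∨ j ≤ #(productTriple x p)) :
    #{T ∈ (univ.erase x).powersetCard k | productTriple x p ⊆ T} * (#(univ.erase x)).choose j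
      ≤ (#(univ.erase x)).choose k * k.choose j := by
  rcases hj with hx | hj
  · have hempty : {T ∈ (univ.erase x).powersetCard k | productTriple x p ⊆ T} = ∅ :=
      filter_eq_empty_iff.2 fun T hT hsub => by
        simpa using (mem_powersetCard.1 hT).1 (hsub (mem_productTriple_of_smul_eq hx))
    simp [hempty]
  · exact card_filter_powersetCard_superset_mul_choose_le hj

variable [Fintype G]

variable (G) in
def productCount (x : X) (T : Finset X) : ℕ := #{p : G × G | productTriple x p ⊆ T}

/-- The third coincidence, `p.1 • x = (p.1 * p.2) • x`, means `p.2 • x = x`; such pairs are never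
counted, since the sets `T` avoid `x`. -/
def collisionPairs (x : X) : Finset (G × G) := {p | p.1 • x = p.2 • x ∨ p.2 • x = (p.1 * p.2) • x}

lemma card_productTriple_of_notMem_collisionPairs (hp : p ∉ collisionPairs x)
    (h : p.2 • x ≠ x) : #(productTriple x p) = 3 := by
  simp only [collisionPairs, mem_filter, mem_univ, true_and, not_or] at hp
  refine card_eq_three.2 ⟨_, _, _, hp.1, ?_, hp.2, rfl⟩
  simpa [mul_smul, eq_comm] using h

variable [Fintype X]

lemma card_filter_smul_eq_mul_card [IsPretransitive G X] (x y : X) :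
    #{g : G | g • x = y} * Fintype.card X = Fintype.card G := by
  have hfiber : ∀ y : X, #{g : G | g • x = y} = #{g : G | g • x = x} := by
    intro y
    obtain ⟨g₀, rfl⟩ := exists_smul_eq G x y
    refine card_nbij' (g₀⁻¹ * ·) (g₀ * ·) ?_ ?_ ?_ ?_ <;> intro g hg <;>
      simp_all [mul_smul]
  calc #{g : G | g • x = y} * Fintype.card X = ∑ z : X, #{g : G | g • x = z} := by
        simp [hfiber, mul_comm]
    _ = Fintype.card G := (card_eq_sum_card_fiberwise fun _ _ => mem_univ _).symm

lemma card_filter_prod_smul_eq_mul_card [IsPretransitive G X] (y z : G → X) :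
    #{p : G × G | p.1 • y p.2 = z p.2} * Fintype.card X = Fintype.card G ^ 2 := by
  rw [card_filter, Fintype.sum_prod_type_right, sum_mul]
  simp_rw [← card_filter, card_filter_smul_eq_mul_card]
  simp [sq]

lemma card_collisionPairs_mul_le [IsPretransitive G X] (x : X) :
    #(collisionPairs (G := G) x) * Fintype.card X ≤ 2 * Fintype.card G ^ 2 := by
  classical
  have h₁ := card_filter_prod_smul_eq_mul_card (G := G) (fun _ => x) (· • x)
  have h₂ : #{p : G × G | p.2 • x = (p.1 * p.2) • x} * Fintype.card X = Fintype.card G ^ 2 := by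
    rw [← card_filter_prod_smul_eq_mul_card (G := G) (· • x) (· • x)]
    congr 2
    ext p
    simp only [mem_filter, mem_univ, true_and, mul_smul]
    exact eq_comm
  calc #(collisionPairs (G := G) x) * Fintype.card X
      ≤ (#{p : G × G | p.1 • x = p.2 • x} + #{p : G × G | p.2 • x = (p.1 * p.2) • x})
          * Fintype.card X := by
        gcongr
        rw [collisionPairs, filter_or]
        exact card_union_le _ _
    _ = 2 * Fintype.card G ^ 2 := by rw [add_mul, h₁, h₂]; ring

lemma sum_productCount_le (x : X) (k : ℕ) (h3 : 3 ≤ #(univ.erase x)) :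
    ∑ T ∈ (univ.erase x).powersetCard k, (productCount G x T : ℝ)
      ≤ (#(univ.erase x)).choose k *
        (#(collisionPairs (G := G) x) * ((k.choose 2 : ℝ) / (#(univ.erase x)).choose 2)
          + Fintype.card G ^ 2 * ((k.choose 3 : ℝ) / (#(univ.erase x)).choose 3)) := by
  classical
  set U := univ.erase x
  set D := collisionPairs (G := G) x
  have hpair : ∀ p : G × G, ∀ j ≤ #U, (p.2 • x = x ∨ j ≤ #(productTriple x p)) →
      (#{T ∈ U.powersetCard k | productTriple x p ⊆ T} : ℝ)
        ≤ (#U).choose k * ((k.choose j : ℝ) / (#U).choose j) := by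
    intro p j hj h
    rw [mul_div_assoc', le_div_iff₀ (by exact_mod_cast Nat.choose_pos hj)]
    exact_mod_cast card_superset_productTriple_mul_choose_le h
  calc ∑ T ∈ U.powersetCard k, (productCount G x T : ℝ)
      = ∑ p : G × G, (#{T ∈ U.powersetCard k | productTriple x p ⊆ T} : ℝ) := by
        exact_mod_cast sum_card_bipartiteAbove_eq_sum_card_bipartiteBelow _
    _ = ∑ p ∈ D, (#{T ∈ U.powersetCard k | productTriple x p ⊆ T} : ℝ)
          + ∑ p ∈ Dᶜ, (#{T ∈ U.powersetCard k | productTriple x p ⊆ T} : ℝ) :=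
        (sum_add_sum_compl D _).symm
    _ ≤ #D • ((#U).choose k * ((k.choose 2 : ℝ) / (#U).choose 2))
          + #Dᶜ • ((#U).choose k * ((k.choose 3 : ℝ) / (#U).choose 3)) := by
        gcongr
        · exact sum_le_card_nsmul _ _ _ fun p _ =>
            hpair p 2 (by omega) ((em _).imp_right two_le_card_productTriple)
        · refine sum_le_card_nsmul _ _ _ fun p hp => hpair p 3 h3 ((em _).imp_right fun h => ?_)
          exact (card_productTriple_of_notMem_collisionPairs (mem_compl.1 hp) h).ge
    _ ≤ #D • ((#U).choose k * ((k.choose 2 : ℝ) / (#U).choose 2))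
          + (Fintype.card G ^ 2) • ((#U).choose k * ((k.choose 3 : ℝ) / (#U).choose 3)) := by
        gcongr
        simpa [sq] using card_le_univ Dᶜ
    _ = _ := by simp only [nsmul_eq_mul]; push_cast; ring

lemma exists_productCount_le [IsPretransitive G X] (x : X) {k : ℕ}
    (hk : k ≤ Fintype.card X - 1) (hX : 3 < Fintype.card X) :
    ∃ T ∈ (univ.erase x).powersetCard k, (productCount G x T : ℝ)
      ≤ 4 * Fintype.card G ^ 2 * k ^ 3 / (Fintype.card X - 3) ^ 3 := by
  have hU : #(univ.erase x) = Fintype.card X - 1 := card_erase_of_mem (mem_univ x)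
  have hUX : (#(univ.erase x) : ℝ) + 1 = Fintype.card X := by
    exact_mod_cast card_erase_add_one (mem_univ x)
  have hX' : (3 : ℝ) < Fintype.card X := by exact_mod_cast hX
  obtain ⟨T, hT, hle⟩ := exists_le_of_sum_le (powersetCard_nonempty.2 (hU ▸ hk))
    ((sum_productCount_le (G := G) x k (by omega)).trans_eq
      (by rw [sum_const, card_powersetCard, nsmul_eq_mul]))
  refine ⟨T, hT, hle.trans ((?_ : _ ≤ _).trans
    (two_div_mul_sq_add_mul_cube_le hX' (by positivity) k))⟩
  have hq₂ := Nat.choose_div_choose_le_div_pow (α := ℝ) (n := k) (N := #(univ.erase x)) (j := 2)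
    (by omega)
  have hq₃ := Nat.choose_div_choose_le_div_pow (α := ℝ) (n := k) (N := #(univ.erase x)) (j := 3)
    (by omega)
  rw [hUX, Nat.cast_ofNat] at hq₂ hq₃
  have hD : (#(collisionPairs (G := G) x) : ℝ) ≤ 2 * Fintype.card G ^ 2 / Fintype.card X := by
    rw [le_div_iff₀ (by positivity)]
    exact_mod_cast card_collisionPairs_mul_le x
  exact add_le_add (mul_le_mul hD hq₂ (by positivity) (by positivity))
    (mul_le_mul_of_nonneg_left hq₃ (by positivity))

end TransitiveAction

theorem exists_product_poor_union_of_cosets_general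
    {G X : Type} [Group G] [Fintype G] [DecidableEq G]
    [Fintype X] [DecidableEq X] [MulAction G X]
    (htrans : MulAction.IsPretransitive G X)
    (n m k : ℕ) (hn : n = Fintype.card G) (hm : m = Fintype.card X)
    (hm3 : 3 < m) (x₀ : X) (hkm : k ≤ m - 1) :
    ∃ T : Finset X, x₀ ∉ T ∧ T.card = k ∧
      ((((Finset.univ.filter (fun g : G => g • x₀ ∈ T)) ×ˢ
          (Finset.univ.filter (fun g : G => g • x₀ ∈ T))).filter
          (fun ab => ab.1 * ab.2 ∈ Finset.univ.filter (fun g : G => g • x₀ ∈ T))).card : ℝ)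
        ≤ 4 * (n : ℝ) ^ 2 * (k : ℝ) ^ 3 / ((m : ℝ) - 3) ^ 3 := by
  have := htrans
  subst hn hm
  obtain ⟨T, hT, hle⟩ := exists_productCount_le (G := G) x₀ hkm hm3
  rw [mem_powersetCard] at hT
  refine ⟨T, fun hx => by simpa using hT.1 hx, hT.2, le_of_eq_of_le ?_ hle⟩
  congr 2
  ext p
  simp [productTriple, insert_subset_iff, and_assoc]

/-- Let `G` be a finite group of order `n` acting transitively on a set `X` of size `m > 3`
(with distinguished base point `x₀`, playing the role of the point `1` of `{1, …, m}`),
and let `3 ≤ k ≤ m - 1`. Then there is a subset `T` of `X \ {x₀}` with `|T| = k` such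
that, setting `S_T = {g ∈ G : g • x₀ ∈ T}`, the number of pairs `(a, b) ∈ S_T × S_T` with
`a * b ∈ S_T` is at most `4 * n² * k³ / (m - 3)³`. -/
theorem exists_product_poor_union_of_cosets
    {G X : Type} [Group G] [Fintype G] [DecidableEq G]
    [Fintype X] [DecidableEq X] [MulAction G X]
    (htrans : MulAction.IsPretransitive G X)
    (n m k : ℕ) (hn : n = Fintype.card G) (hm : m = Fintype.card X)
    (hm3 : 3 < m) (x₀ : X) (hk3 : 3 ≤ k) (hkm : k ≤ m - 1) :
    ∃ T : Finset X, x₀ ∉ T ∧ T.card = k ∧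
      ((((Finset.univ.filter (fun g : G => g • x₀ ∈ T)) ×ˢ
          (Finset.univ.filter (fun g : G => g • x₀ ∈ T))).filter
          (fun ab => ab.1 * ab.2 ∈ Finset.univ.filter (fun g : G => g • x₀ ∈ T))).card : ℝ)
        ≤ 4 * (n : ℝ) ^ 2 * (k : ℝ) ^ 3 / ((m : ℝ) - 3) ^ 3 :=
  exists_product_poor_union_of_cosets_general htrans n m k hn hm hm3 x₀ hkm
end

section
/- Let G be a finite group of order n acting transitively on the set {1, 2, …, m} with m ≥ 4, and let k be an integer with 3 ≤ k ≤ m − 1. Then the sum over all subsets T of {2, …, m} with |T| = k of the number of pairs (a, b) ∈ G × G such that a(1) ∈ T, b(1) ∈ T, and (ab)(1) ∈ T is at most 4n²·C(m − 4, k − 3), where C(·,·) denotes the binomial coefficient. -/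
/-!
Count the triples by double counting: the sum equals `∑_{(a, b)} N(a, b)`, where `N(a, b)` is the
number of `k`-subsets of `X \ {x₀}` containing `a • x₀`, `b • x₀` and `(a * b) • x₀`. Pairs with
`b • x₀ = x₀` contribute nothing, and for the others `a • x₀ ≠ (a * b) • x₀`, so the three points
are distinct unless `a • x₀ = b • x₀` or `(a * b) • x₀ = b • x₀`. Generic pairs contribute at most
`C(m - 4, k - 3)` each. Each coincidence holds for exactly `n · |Stab x₀| = n² / m` pairs, and such
a pair contributes at most `C(m - 3, k - 2) ≤ m · C(m - 4, k - 3)`. This gives the bound with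
constant `3`.
-/

open Finset MulAction

namespace Finset

variable {α : Type*} [DecidableEq α]

theorem card_filter_powersetCard_subset_le (s t : Finset α) (n : ℕ) :
    #((t.powersetCard n).filter (s ⊆ ·)) ≤ (#t - #s).choose (n - #s) := by
  by_cases h : s ⊆ t ∧ #s ≤ n
  · exact (card_filter_powersetCard_subset s t n h.1 h.2).le
  · rw [filter_false_of_mem, card_empty]
    · exact Nat.zero_le _
    intro T hT hsT
    rw [mem_powersetCard] at hT
    exact h ⟨hsT.trans hT.1, hT.2 ▸ card_le_card hsT⟩

theorem card_filter_powersetCard_three_mem_le (t : Finset α) (n : ℕ) {p q r : α}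
    (hpr : p ≠ r) :
    #{T ∈ t.powersetCard n | p ∈ T ∧ q ∈ T ∧ r ∈ T} ≤
      (if p = q then (#t - 2).choose (n - 2) else 0) +
        (if r = q then (#t - 2).choose (n - 2) else 0) + (#t - 3).choose (n - 3) := by
  have hmem (T : Finset α) : (p ∈ T ∧ q ∈ T ∧ r ∈ T) ↔ {p, q, r} ⊆ T := by
    simp only [insert_subset_iff, singleton_subset_iff]
  simp only [hmem]
  refine (card_filter_powersetCard_subset_le _ t n).trans ?_
  by_cases hpq : p = q
  · subst hpq
    simp [hpr, hpr.symm]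
  by_cases hrq : r = q
  · subst hrq
    simp [hpr]
  · rw [card_insert_of_notMem (by simp [hpq, hpr]), card_pair (Ne.symm hrq)]
    simp [hpq, hrq]

end Finset

theorem Nat.choose_succ_le_mul_choose_pred (N j : ℕ) :
    N.choose (j + 1) ≤ N * (N - 1).choose j := by
  cases N with
  | zero => simp
  | succ N =>
    rw [Nat.add_sub_cancel, Nat.add_one_mul_choose_eq]
    exact Nat.le_mul_of_pos_right _ j.succ_pos

namespace MulAction

variable {G X : Type*} [Group G] [MulAction G X]

def prodStabilizerEquivSmulEq (x : X) :
    G × stabilizer G x ≃ {p : G × G // p.1 • x = p.2 • x} where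
  toFun g := ⟨(g.1, g.1 * g.2), by rw [mul_smul, mem_stabilizer_iff.mp g.2.2]⟩
  invFun p := (p.1.1, ⟨p.1.1⁻¹ * p.1.2, by simp [mem_stabilizer_iff, mul_smul, ← p.2]⟩)
  left_inv g := by simp
  right_inv p := by simp

variable [DecidableEq X]

theorem card_filter_smul_eq_smul [Fintype G] (x : X) :
    #{p : G × G | p.1 • x = p.2 • x} = Fintype.card G * Nat.card (stabilizer G x) := by
  rw [← Fintype.card_subtype, ← Nat.card_eq_fintype_card, ← Nat.card_eq_fintype_card,
    ← Nat.card_prod]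
  exact (Nat.card_congr (prodStabilizerEquivSmulEq x)).symm

theorem card_filter_mul_smul_eq_smul [Fintype G] (x : X) :
    #{p : G × G | (p.1 * p.2) • x = p.2 • x} = #{p : G × G | p.1 • x = p.2 • x} :=
  card_nbij' (fun p => (p.1 * p.2, p.2)) (fun p => (p.1 * p.2⁻¹, p.2))
    (fun p hp => by simpa using hp) (fun p hp => by simpa [mul_smul] using hp)
    (fun p _ => by simp) (fun p _ => by simp)

theorem card_filter_powersetCard_smul_mem_le {x : X} {S : Finset X} (hx : x ∉ S) (n : ℕ)
    (a b : G) :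
    #{T ∈ S.powersetCard n | a • x ∈ T ∧ b • x ∈ T ∧ (a * b) • x ∈ T} ≤
      (if a • x = b • x then (#S - 2).choose (n - 2) else 0) +
        (if (a * b) • x = b • x then (#S - 2).choose (n - 2) else 0) +
          (#S - 3).choose (n - 3) := by
  by_cases hb : b • x = x
  · rw [filter_false_of_mem fun T hT h => hx ((mem_powersetCard.mp hT).1 (hb ▸ h.2.1)),
      card_empty]
    exact Nat.zero_le _
  · refine card_filter_powersetCard_three_mem_le S n fun h => hb ?_
    rw [mul_smul] at h
    exact (smul_left_cancel a h).symm

end MulAction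

theorem sum_over_subsets_count_bound_general
    {G X : Type} [Group G] [Fintype G]
    [Fintype X] [DecidableEq X] [MulAction G X]
    (htrans : MulAction.IsPretransitive G X)
    (n m k : ℕ) (hn : n = Fintype.card G) (hm : m = Fintype.card X)
    (x₀ : X) (hk3 : 3 ≤ k) :
    ∑ T ∈ (Finset.univ.erase x₀).powersetCard k,
        ((Finset.univ : Finset (G × G)).filter
          (fun ab => ab.1 • x₀ ∈ T ∧ ab.2 • x₀ ∈ T ∧ (ab.1 * ab.2) • x₀ ∈ T)).card
      ≤ 4 * n ^ 2 * Nat.choose (m - 4) (k - 3) := by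
  have hS : #(univ.erase x₀) = m - 1 := by rw [card_erase_of_mem (mem_univ _), card_univ, hm]
  have hpairs : #{p : G × G | p.1 • x₀ = p.2 • x₀} * m = n ^ 2 := by
    rw [card_filter_smul_eq_smul, mul_assoc, hm, ← Nat.card_eq_fintype_card (α := X),
      ← index_stabilizer_of_transitive G x₀, Subgroup.card_mul_index, Nat.card_eq_fintype_card,
      hn, sq]
  have hchoose : (m - 3).choose (k - 2) ≤ m * (m - 4).choose (k - 3) := by
    have := Nat.choose_succ_le_mul_choose_pred (m - 3) (k - 3)
    rw [show k - 3 + 1 = k - 2 by omega, show m - 3 - 1 = m - 4 by omega] at this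
    exact this.trans (Nat.mul_le_mul_right _ (Nat.sub_le m 3))
  calc _ = ∑ p : G × G, #{T ∈ (univ.erase x₀).powersetCard k |
          p.1 • x₀ ∈ T ∧ p.2 • x₀ ∈ T ∧ (p.1 * p.2) • x₀ ∈ T} :=
        sum_card_bipartiteAbove_eq_sum_card_bipartiteBelow _
    _ ≤ ∑ p : G × G, ((if p.1 • x₀ = p.2 • x₀ then (m - 3).choose (k - 2) else 0) +
          (if (p.1 * p.2) • x₀ = p.2 • x₀ then (m - 3).choose (k - 2) else 0) +
            (m - 4).choose (k - 3)) := by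
        refine sum_le_sum fun p _ => ?_
        have := card_filter_powersetCard_smul_mem_le (notMem_erase x₀ univ) k p.1 p.2
        rwa [hS, Nat.sub_sub, Nat.sub_sub] at this
    _ = 2 * #{p : G × G | p.1 • x₀ = p.2 • x₀} * (m - 3).choose (k - 2) +
          n ^ 2 * (m - 4).choose (k - 3) := by
        simp only [sum_add_distrib, sum_ite, sum_const_zero, add_zero, sum_const, smul_eq_mul,
          card_filter_mul_smul_eq_smul, card_univ, Fintype.card_prod, ← hn]
        ring
    _ ≤ 4 * n ^ 2 * (m - 4).choose (k - 3) := by nlinarith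

/-- Let `G` be a finite group of order `n` acting transitively on a set `X` of size `m ≥ 4`
(with distinguished base point `x₀`, playing the role of the point `1` of `{1, …, m}`),
and let `3 ≤ k ≤ m - 1`. Then the sum, over all subsets `T` of `X \ {x₀}` with `|T| = k`,
of the number of pairs `(a, b) ∈ G × G` with `a • x₀ ∈ T`, `b • x₀ ∈ T` and
`(a * b) • x₀ ∈ T`, is at most `4 * n² * C(m - 4, k - 3)`. -/
theorem sum_over_subsets_count_bound
    {G X : Type} [Group G] [Fintype G] [DecidableEq G]
    [Fintype X] [DecidableEq X] [MulAction G X]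
    (htrans : MulAction.IsPretransitive G X)
    (n m k : ℕ) (hn : n = Fintype.card G) (hm : m = Fintype.card X)
    (hm4 : 4 ≤ m) (x₀ : X) (hk3 : 3 ≤ k) (hkm : k ≤ m - 1) :
    ∑ T ∈ (Finset.univ.erase x₀).powersetCard k,
        ((Finset.univ : Finset (G × G)).filter
          (fun ab => ab.1 • x₀ ∈ T ∧ ab.2 • x₀ ∈ T ∧ (ab.1 * ab.2) • x₀ ∈ T)).card
      ≤ 4 * n ^ 2 * Nat.choose (m - 4) (k - 3) :=
  sum_over_subsets_count_bound_general htrans n m k hn hm x₀ hk3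
end
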